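/- Let x* be a feasible LP solution, C = {narrow cuts} a family of cuts each intersected by every s-t-path, and let S be a spanning tree with s-t-path I_S. Fix 0 ≤ β ≤ 1/2, and let z^S ∈ ℝ^E_{≥0} satisfy z^S(C) ≥ β(2 − x*(C)) for all narrow cuts C with |S ∩ C| even. Define y^S := β x* + (1−2β) χ^{J_S} + z^S, where J_S = S \ I_S. Then for every T_S-cut C we have y^S(C) ≥ 1. -/

import Mathlib

/-! The tree edges off the path, `J = S \ I`, form a `T_S`-join: the degree of `J` at `v` has
the parity of the degree of `S` corrected by that of the path `I`, which is odd exactly at `s`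
and `t`. By the handshake lemma mod 2, a `T`-join meets every `T`-cut an odd number of times, so
the term `(1 - 2β) χ^J` contributes at least `1 - 2β` on a `T_S`-cut `C`. If `x(C) ≥ 2`, the term
`β x` supplies the missing `2β`. Otherwise `C` is narrow, hence separates `s` from `t`; then the
path `I` also meets `C` oddly, `|S ∩ C|` is even, and `z(C) ≥ β (2 - x(C))` makes up the
difference. -/

open Finset

noncomputable def cut {V : Type*} [Fintype V] [DecidableEq V] (U : Finset V) :
    Finset (Sym2 V) :=
  Finset.univ.filter (fun e => ∃ u v : V, e = s(u, v) ∧ u ∈ U ∧ v ∉ U)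

def IsSpanningTree {V : Type*} [Fintype V] (S : Finset (Sym2 V)) : Prop :=
  (SimpleGraph.fromEdgeSet (↑S : Set (Sym2 V))).IsTree ∧ ∀ e ∈ S, ¬ e.IsDiag

theorem card_inter_eq_add_card_sdiff_inter {α : Type*} [DecidableEq α] {I S : Finset α}
    (hIS : I ⊆ S) (A : Finset α) : (S ∩ A).card = (I ∩ A).card + ((S \ I) ∩ A).card := by
  rw [← card_union_of_disjoint, ← union_inter_distrib_right, union_sdiff_of_subset hIS]
  exact disjoint_sdiff.mono inter_subset_left inter_subset_left

theorem odd_card_inter_pair {α : Type*} [DecidableEq α] {s t : α} {U : Finset α}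
    (h : ¬(s ∈ U ↔ t ∈ U)) : Odd (U ∩ {s, t}).card := by
  by_cases hs : s ∈ U
  · rw [inter_insert_of_mem hs, inter_singleton_of_notMem (by tauto)]; simp
  · rw [inter_insert_of_notMem hs, inter_singleton_of_mem (by tauto)]; simp

section Cuts

variable {V : Type*} [Fintype V] [DecidableEq V]

theorem mem_cut_iff {U : Finset V} {a b : V} :
    s(a, b) ∈ cut U ↔ a ∈ U ∧ b ∉ U ∨ b ∈ U ∧ a ∉ U := by
  simp only [cut, mem_filter, mem_univ, true_and, Sym2.eq_iff]
  constructor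
  · rintro ⟨u, v, (⟨rfl, rfl⟩ | ⟨rfl, rfl⟩), hu, hv⟩ <;> tauto
  · rintro (⟨ha, hb⟩ | ⟨hb, ha⟩)
    · exact ⟨a, b, Or.inl ⟨rfl, rfl⟩, ha, hb⟩
    · exact ⟨b, a, Or.inr ⟨rfl, rfl⟩, hb, ha⟩

theorem mem_cut_singleton_iff {v : V} {e : Sym2 V} : e ∈ cut {v} ↔ v ∈ e ∧ ¬e.IsDiag := by
  induction e using Sym2.ind with
  | _ a b =>
    simp only [mem_cut_iff, mem_singleton, Sym2.mem_iff, Sym2.mk_isDiag_iff]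
    grind

theorem cut_indicator_eq (U : Finset V) (a b : V) :
    (if s(a, b) ∈ cut U then 1 else 0 : ZMod 2) =
      (if a ∈ U then 1 else 0) + (if b ∈ U then 1 else 0) := by
  by_cases ha : a ∈ U <;> by_cases hb : b ∈ U <;> simp [mem_cut_iff, ha, hb]; decide

theorem cut_indicator_eq_sum (U : Finset V) (e : Sym2 V) :
    (if e ∈ cut U then 1 else 0 : ZMod 2) = ∑ v ∈ U, if e ∈ cut {v} then 1 else 0 := by
  induction e using Sym2.ind with
  | _ a b => simp only [cut_indicator_eq, mem_singleton, sum_add_distrib, sum_ite_eq]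

theorem cast_card_inter_cut_eq_sum (F : Finset (Sym2 V)) (U : Finset V) :
    ((F ∩ cut U).card : ZMod 2) = ∑ v ∈ U, ((cut {v} ∩ F).card : ZMod 2) := by
  simp only [← filter_mem_eq_inter, inter_comm (cut _) F, card_filter, Nat.cast_sum,
    Nat.cast_ite, Nat.cast_one, Nat.cast_zero]
  rw [sum_congr rfl fun e _ => cut_indicator_eq_sum U e, sum_comm]

end Cuts

section TJoin

variable {V : Type*} [Fintype V] [DecidableEq V]

def IsTJoin (T : Finset V) (F : Finset (Sym2 V)) : Prop :=
  ∀ v, Odd (cut {v} ∩ F).card ↔ v ∈ T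

theorem IsTJoin.cast_card_inter_cut {T : Finset V} {F : Finset (Sym2 V)} (hF : IsTJoin T F)
    (U : Finset V) : ((F ∩ cut U).card : ZMod 2) = (U ∩ T).card := by
  rw [cast_card_inter_cut_eq_sum, ← filter_mem_eq_inter, card_filter]
  push_cast
  refine sum_congr rfl fun v _ => ?_
  split_ifs with hv
  · exact ZMod.natCast_eq_one_iff_odd.2 ((hF v).2 hv)
  · exact ZMod.natCast_eq_zero_iff_even.2 (Nat.not_odd_iff_even.1 (mt (hF v).1 hv))

theorem IsTJoin.odd_card_inter_cut {T : Finset V} {F : Finset (Sym2 V)} (hF : IsTJoin T F)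
    {U : Finset V} (hU : Odd (U ∩ T).card) : Odd (F ∩ cut U).card := by
  rwa [← ZMod.natCast_eq_one_iff_odd, hF.cast_card_inter_cut, ZMod.natCast_eq_one_iff_odd]

theorem SimpleGraph.Walk.IsTrail.isTJoin_edges {G : SimpleGraph V} {s t : V} {p : G.Walk s t}
    (hp : p.IsTrail) (hst : s ≠ t) : IsTJoin {s, t} p.edges.toFinset := by
  intro v
  have hdeg : (cut {v} ∩ p.edges.toFinset).card = p.edges.countP (v ∈ ·) := by
    rw [inter_comm, ← filter_mem_eq_inter, hp.edges_nodup.card_eq_countP]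
    refine List.countP_congr fun e he => ?_
    simp [mem_cut_singleton_iff, G.not_isDiag_of_mem_edgeSet (p.edges_subset_edgeSet he)]
  rw [hdeg, ← Nat.not_even_iff_odd, hp.even_countP_edges_iff, mem_insert, mem_singleton]
  tauto

theorem IsTJoin.sdiff {T : Finset V} {I S : Finset (Sym2 V)} (hIS : I ⊆ S) (hI : IsTJoin T I) :
    IsTJoin (univ.filter fun v => v ∈ T ↔ Even (cut {v} ∩ S).card) (S \ I) := by
  intro v
  rw [mem_filter, ← hI v, inter_comm _ S, card_inter_eq_add_card_sdiff_inter hIS, inter_comm I,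
    inter_comm (S \ I), Nat.even_add, ← Nat.not_even_iff_odd, ← Nat.not_even_iff_odd]
  simp only [mem_univ, true_and]
  tauto

end TJoin

theorem correction_vector_feasible_general {V : Type*} [Fintype V] [DecidableEq V]
    (s t : V) (hst : s ≠ t)
    (x : Sym2 V → ℝ)
    (heven : ∀ U : Finset V, U.Nonempty → U ≠ Finset.univ →
      ((s ∈ U) ↔ (t ∈ U)) → 2 ≤ ∑ e ∈ cut U, x e)
    (S I : Finset (Sym2 V))
    (P : (SimpleGraph.fromEdgeSet (↑S : Set (Sym2 V))).Walk s t) (hP : P.IsPath)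
    (hI : I = P.edges.toFinset)
    (β : ℝ) (hβ0 : 0 ≤ β) (hβ2 : β ≤ 1/2)
    (z : Sym2 V → ℝ) (hz0 : ∀ e, 0 ≤ z e)
    (hz : ∀ U : Finset V, U.Nonempty → U ≠ Finset.univ →
      (∑ e ∈ cut U, x e) < 2 → Even ((S ∩ cut U).card) →
      β * (2 - ∑ e ∈ cut U, x e) ≤ ∑ e ∈ cut U, z e) :
    ∀ U : Finset V, U.Nonempty → U ≠ Finset.univ →
      Odd ((U ∩ Finset.univ.filter
        (fun v => (v = s ∨ v = t) ↔ Even ((cut {v} ∩ S).card))).card) →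
      1 ≤ ∑ e ∈ cut U,
        (β * x e + (1 - 2*β) * (if e ∈ S \ I then 1 else 0) + z e) := by
  intro U hU hUuniv hTU
  have hIS : I ⊆ S := fun e he => by
    rw [hI, List.mem_toFinset] at he
    exact (SimpleGraph.edgeSet_fromEdgeSet _ ▸ P.edges_subset_edgeSet he).1
  have hIjoin : IsTJoin {s, t} I := hI ▸ hP.isTrail.isTJoin_edges hst
  have hJjoin := hIjoin.sdiff hIS
  simp only [mem_insert, mem_singleton] at hJjoin
  have hJodd : Odd ((S \ I) ∩ cut U).card := hJjoin.odd_card_inter_cut hTU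
  have hJ1 : (1 : ℝ) ≤ ((S \ I) ∩ cut U).card := by exact_mod_cast hJodd.pos
  have hsplit : ∑ e ∈ cut U, (β * x e + (1 - 2*β) * (if e ∈ S \ I then 1 else 0) + z e) =
      β * ∑ e ∈ cut U, x e + (1 - 2*β) * ((S \ I) ∩ cut U).card + ∑ e ∈ cut U, z e := by
    rw [sum_add_distrib, sum_add_distrib, ← mul_sum, ← mul_sum, sum_boole, filter_mem_eq_inter,
      inter_comm]
  have hzC : 0 ≤ ∑ e ∈ cut U, z e := sum_nonneg fun e _ => hz0 e
  have hJcost := mul_le_mul_of_nonneg_left hJ1 (by linarith : 0 ≤ 1 - 2*β)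
  rw [hsplit]
  rcases le_or_gt 2 (∑ e ∈ cut U, x e) with hwide | hnarrow
  · linarith [mul_le_mul_of_nonneg_left hwide hβ0]
  · have hIodd : Odd (I ∩ cut U).card :=
      hIjoin.odd_card_inter_cut (odd_card_inter_pair fun h => (heven U hU hUuniv h).not_gt hnarrow)
    have hSeven : Even (S ∩ cut U).card := by
      rw [card_inter_eq_add_card_sdiff_inter hIS]
      exact hIodd.add_odd hJodd
    linarith [hz U hU hUuniv hnarrow hSeven]

/-- The correction vector y^S = β x* + (1-2β) χ^{J_S} + z^S is in the
T_S-join polyhedron: it has value at least 1 on every T_S-cut. -/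
theorem correction_vector_feasible {V : Type*} [Fintype V] [DecidableEq V]
    (s t : V) (hst : s ≠ t)
    (x : Sym2 V → ℝ) (hx0 : ∀ e, 0 ≤ x e)
    (heven : ∀ U : Finset V, U.Nonempty → U ≠ Finset.univ →
      ((s ∈ U) ↔ (t ∈ U)) → 2 ≤ ∑ e ∈ cut U, x e)
    (S I : Finset (Sym2 V)) (hS : IsSpanningTree S)
    (P : (SimpleGraph.fromEdgeSet (↑S : Set (Sym2 V))).Walk s t) (hP : P.IsPath)
    (hI : I = P.edges.toFinset)
    (β : ℝ) (hβ0 : 0 ≤ β) (hβ2 : β ≤ 1/2)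
    (z : Sym2 V → ℝ) (hz0 : ∀ e, 0 ≤ z e)
    (hz : ∀ U : Finset V, U.Nonempty → U ≠ Finset.univ →
      (∑ e ∈ cut U, x e) < 2 → Even ((S ∩ cut U).card) →
      β * (2 - ∑ e ∈ cut U, x e) ≤ ∑ e ∈ cut U, z e) :
    ∀ U : Finset V, U.Nonempty → U ≠ Finset.univ →
      Odd ((U ∩ Finset.univ.filter
        (fun v => (v = s ∨ v = t) ↔ Even ((cut {v} ∩ S).card))).card) →
      1 ≤ ∑ e ∈ cut U,
        (β * x e + (1 - 2*β) * (if e ∈ S \ I then 1 else 0) + z e) :=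
  correction_vector_feasible_general s t hst x heven S I P hP hI β hβ0 hβ2 z hz0 hz
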